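/- Let X be a random variable whose law has density f(x) = 1/2 for x ∈ [0,1/2) and f(x) = 3/2 for x ∈ [1/2, 1] (and 0 elsewhere). Then for all b₂, b₃ ∈ {0,1}, P[B_2(X) = b₂, B_3(X) = b₃] = 1/4 = P[B_2(X) = b₂] · P[B_3(X) = b₃]; hence B_2(X) and B_3(X) are independent. -/
import Mathlib


open MeasureTheory ProbabilityTheory Set
open scoped ENNReal

/-- The `i`-th binary digit of `x ∈ [0,1]`: `B_i(x) = ⌊2^i x⌋ mod 2`. -/
noncomputable def binDigit (i : ℕ) (x : ℝ) : ℤ := ⌊(2:ℝ)^i * x⌋ % 2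

/-- The density `f(x) = 1/2` on `[0,1/2)`, `f(x) = 3/2` on `[1/2,1]`, `0` elsewhere. -/
noncomputable def stepDensity (x : ℝ) : ℝ :=
  if x ∈ Set.Ico (0:ℝ) (1/2) then 1/2 else if x ∈ Set.Icc (1/2 : ℝ) 1 then 3/2 else 0

lemma ofReal_quarter : (1/4 : ℝ≥0∞) = ENNReal.ofReal (1/4) := by
  rw [show (1/4:ℝ) = (4:ℝ)⁻¹ by norm_num, ENNReal.ofReal_inv_of_pos (by norm_num)]
  norm_num

lemma ofReal_half : (1/2 : ℝ≥0∞) = ENNReal.ofReal (1/2) := by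
  rw [show (1/2:ℝ) = (2:ℝ)⁻¹ by norm_num, ENNReal.ofReal_inv_of_pos (by norm_num)]
  norm_num

lemma half_mul_half : (1/2 : ℝ≥0∞) * (1/2) = 1/4 := by
  rw [ofReal_half, ofReal_quarter, ← ENNReal.ofReal_mul (by norm_num)]; norm_num

lemma quarter_add_quarter : (1/4 : ℝ≥0∞) + 1/4 = 1/2 := by
  rw [ofReal_half, ofReal_quarter, ← ENNReal.ofReal_add (by norm_num) (by norm_num)]
  norm_num

lemma measurable_binDigit (i : ℕ) : Measurable (binDigit i) :=
  (Measurable.of_discrete (f := (· % 2))).comp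
    (Int.measurable_floor.comp (measurable_const_mul _))

lemma binDigit_zero_or_one (i : ℕ) (x : ℝ) : binDigit i x = 0 ∨ binDigit i x = 1 :=
  Int.emod_two_eq_zero_or_one _

lemma bd_vals (k : ℤ) (x : ℝ) (h1 : (k:ℝ)/8 ≤ x) (h2 : x < ((k:ℝ)+1)/8) :
    binDigit 3 x = k % 2 ∧ binDigit 2 x = (k / 2) % 2 := by
  have h8 : ⌊(2:ℝ)^3 * x⌋ = k := by
    rw [Int.floor_eq_iff]
    constructor <;> [norm_num; push_cast] <;> nlinarith
  have hk : 2*(k/2) ≤ k ∧ k ≤ 2*(k/2)+1 := by omega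
  have h4 : ⌊(2:ℝ)^2 * x⌋ = k / 2 := by
    rw [Int.floor_eq_iff]
    constructor
    · have := hk.1
      have : ((2*(k/2) : ℤ) : ℝ) ≤ (k:ℝ) := by exact_mod_cast this
      push_cast at this ⊢; nlinarith
    · have := hk.2
      have : (k:ℝ) ≤ ((2*(k/2)+1 : ℤ) : ℝ) := by exact_mod_cast this
      push_cast at this ⊢; nlinarith
  exact ⟨by rw [binDigit, h8], by rw [binDigit, h4]⟩

lemma inter_eq (b₂ b₃ : ℤ) (h₂ : b₂ = 0 ∨ b₂ = 1) (h₃ : b₃ = 0 ∨ b₃ = 1)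
    (m : ℤ) (hm : m = 0 ∨ m = 1) :
    {x : ℝ | binDigit 2 x = b₂ ∧ binDigit 3 x = b₃} ∩ Ico ((m:ℝ)/2) (((m:ℝ)+1)/2)
      = Ico (((4*m+2*b₂+b₃ : ℤ):ℝ)/8) (((4*m+2*b₂+b₃ : ℤ):ℝ)/8 + 1/8) := by
  set k : ℤ := 4*m+2*b₂+b₃ with hkdef
  ext x
  simp only [mem_inter_iff, mem_Ico, mem_setOf_eq]
  constructor
  · rintro ⟨⟨hb2, hb3⟩, hx0, hx1⟩
    set j : ℤ := ⌊(8:ℝ) * x⌋ with hjdef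
    have hjl : (j:ℝ) ≤ 8*x := Int.floor_le _
    have hju : 8*x < (j:ℝ)+1 := Int.lt_floor_add_one _
    have hj1 : 4*m ≤ j := Int.le_floor.mpr (by push_cast; linarith)
    have hj2 : j < 4*m+4 := Int.floor_lt.mpr (by push_cast; linarith)
    obtain ⟨e3, e2⟩ := bd_vals j x (by linarith) (by linarith)
    have hjk : j = k := by
      rw [e3] at hb3; rw [e2] at hb2; omega
    have hkl : ((k:ℤ):ℝ) ≤ 8*x := by rw [← hjk]; exact hjl
    have hku : 8*x < ((k:ℤ):ℝ)+1 := by rw [← hjk]; exact hju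
    constructor <;> linarith
  · rintro ⟨hl, hr⟩
    obtain ⟨e3, e2⟩ := bd_vals k x (by linarith) (by linarith)
    have hb2 : (k/2) % 2 = b₂ := by omega
    have hb3 : k % 2 = b₃ := by omega
    have c1 : ((4*m : ℤ):ℝ) ≤ (k:ℝ) := by exact_mod_cast by omega
    have c2 : ((k:ℤ):ℝ)+1 ≤ ((4*m+4 : ℤ):ℝ) := by exact_mod_cast by omega
    push_cast at c1 c2
    refine ⟨⟨by rw [e2, hb2], by rw [e3, hb3]⟩, by linarith, by linarith⟩

lemma mu_apply (S : Set ℝ) (hS : MeasurableSet S) :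
    (volume.withDensity fun x => ENNReal.ofReal (stepDensity x)) S
      = ENNReal.ofReal (1/2) * volume (S ∩ Ico 0 (1/2))
        + ENNReal.ofReal (3/2) * volume (S ∩ Ico (1/2) 1) := by
  have h1 : ∀ᵐ x : ℝ, x ≠ 1 := by simp [ae_iff]
  have hae : (fun x => ENNReal.ofReal (stepDensity x)) =ᵐ[volume]
      ((Ico (0:ℝ) (1/2)).indicator (fun _ => ENNReal.ofReal (1/2))
        + (Ico (1/2:ℝ) 1).indicator (fun _ => ENNReal.ofReal (3/2))) := by
    filter_upwards [h1] with x hx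
    have hxx := lt_or_gt_of_ne hx
    simp only [stepDensity, Pi.add_apply, Set.indicator_apply, mem_Ico, mem_Icc]
    split_ifs with hA hB hB hC hC
    · exact absurd hB.1 (not_le.mpr (by linarith [hA.2]))
    · simp
    · simp
    · exfalso; push_neg at hC; have := hC hB.1; rcases hxx with h|h <;> linarith [hB.2]
    · exfalso; push_neg at hB; have := hB hC.1; linarith [hC.2]
    · simp
  rw [withDensity_congr_ae hae, withDensity_add_left (measurable_const.indicator measurableSet_Ico),
    withDensity_indicator measurableSet_Ico, withDensity_indicator measurableSet_Ico,
    withDensity_const, withDensity_const, Measure.add_apply, Measure.smul_apply,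
    Measure.smul_apply, Measure.restrict_apply hS, Measure.restrict_apply hS, smul_eq_mul, smul_eq_mul]

lemma joint_measure (b₂ b₃ : ℤ) (h₂ : b₂ = 0 ∨ b₂ = 1) (h₃ : b₃ = 0 ∨ b₃ = 1) :
    (volume.withDensity fun x => ENNReal.ofReal (stepDensity x))
      {x : ℝ | binDigit 2 x = b₂ ∧ binDigit 3 x = b₃} = 1/4 := by
  have hS : MeasurableSet {x : ℝ | binDigit 2 x = b₂ ∧ binDigit 3 x = b₃} :=
    (measurable_binDigit 2 (measurableSet_singleton b₂)).inter
      (measurable_binDigit 3 (measurableSet_singleton b₃))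
  rw [mu_apply _ hS]
  have e0 := inter_eq b₂ b₃ h₂ h₃ 0 (Or.inl rfl)
  have e1 := inter_eq b₂ b₃ h₂ h₃ 1 (Or.inr rfl)
  have i0 : Ico (((0:ℤ):ℝ)/2) ((((0:ℤ):ℝ)+1)/2) = Ico (0:ℝ) (1/2) := by norm_num
  have i1 : Ico (((1:ℤ):ℝ)/2) ((((1:ℤ):ℝ)+1)/2) = Ico (1/2:ℝ) 1 := by norm_num
  rw [i0] at e0; rw [i1] at e1
  rw [e0, e1, Real.volume_Ico, Real.volume_Ico, add_sub_cancel_left, add_sub_cancel_left,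
    ← ENNReal.ofReal_mul (by norm_num), ← ENNReal.ofReal_mul (by norm_num),
    ← ENNReal.ofReal_add (by norm_num) (by norm_num), ofReal_quarter]
  norm_num

open scoped Classical in
lemma preim_eq {Ω : Type*} (f : Ω → ℤ) (hf01 : ∀ ω, f ω = 0 ∨ f ω = 1) (s : Set ℤ) :
    f ⁻¹' s = (if (0:ℤ) ∈ s then {ω | f ω = 0} else ∅)
      ∪ (if (1:ℤ) ∈ s then {ω | f ω = 1} else ∅) := by
  ext ω
  rcases hf01 ω with h|h <;> by_cases h0 : (0:ℤ) ∈ s <;> by_cases h1 : (1:ℤ) ∈ s <;>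
    simp [h, h0, h1]

/-- For `X` with the step density, for all `b₂, b₃ ∈ {0,1}`,
`P[B_2(X) = b₂, B_3(X) = b₃] = 1/4 = P[B_2(X) = b₂] · P[B_3(X) = b₃]`;
hence `B_2(X)` and `B_3(X)` are independent. -/
theorem binDigit_two_three_indep_stepDensity
    {Ω : Type*} [MeasureSpace Ω] [IsProbabilityMeasure (ℙ : Measure Ω)]
    (X : Ω → ℝ) (hX : Measurable X)
    (hlaw : Measure.map X ℙ = volume.withDensity (fun x => ENNReal.ofReal (stepDensity x))) :
    (∀ b₂ b₃ : ℤ, (b₂ = 0 ∨ b₂ = 1) → (b₃ = 0 ∨ b₃ = 1) →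
      ℙ {ω | binDigit 2 (X ω) = b₂ ∧ binDigit 3 (X ω) = b₃} = 1/4 ∧
      ℙ {ω | binDigit 2 (X ω) = b₂ ∧ binDigit 3 (X ω) = b₃}
        = ℙ {ω | binDigit 2 (X ω) = b₂} * ℙ {ω | binDigit 3 (X ω) = b₃}) ∧
    IndepFun (fun ω => binDigit 2 (X ω)) (fun ω => binDigit 3 (X ω)) ℙ := by
  have hSmeas : ∀ b₂ b₃ : ℤ, MeasurableSet {x : ℝ | binDigit 2 x = b₂ ∧ binDigit 3 x = b₃} :=
    fun b₂ b₃ => (measurable_binDigit 2 (measurableSet_singleton b₂)).inter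
      (measurable_binDigit 3 (measurableSet_singleton b₃))
  have hJ : ∀ b₂ b₃ : ℤ, (b₂ = 0 ∨ b₂ = 1) → (b₃ = 0 ∨ b₃ = 1) →
      ℙ {ω | binDigit 2 (X ω) = b₂ ∧ binDigit 3 (X ω) = b₃} = 1/4 := by
    intro b₂ b₃ h₂ h₃
    have hset : {ω | binDigit 2 (X ω) = b₂ ∧ binDigit 3 (X ω) = b₃}
        = X ⁻¹' {x | binDigit 2 x = b₂ ∧ binDigit 3 x = b₃} := rfl
    rw [hset, ← Measure.map_apply hX (hSmeas b₂ b₃), hlaw, joint_measure b₂ b₃ h₂ h₃]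
  have hmeasJ : ∀ b₂ b₃ : ℤ, MeasurableSet {ω | binDigit 2 (X ω) = b₂ ∧ binDigit 3 (X ω) = b₃} :=
    fun b₂ b₃ => hX (hSmeas b₂ b₃)
  have hmeasA : ∀ b : ℤ, MeasurableSet {ω | binDigit 2 (X ω) = b} :=
    fun b => hX (measurable_binDigit 2 (measurableSet_singleton b))
  have hmeasB : ∀ b : ℤ, MeasurableSet {ω | binDigit 3 (X ω) = b} :=
    fun b => hX (measurable_binDigit 3 (measurableSet_singleton b))
  have hA : ∀ b₂ : ℤ, (b₂ = 0 ∨ b₂ = 1) → ℙ {ω | binDigit 2 (X ω) = b₂} = 1/2 := by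
    intro b₂ h₂
    have hsp : {ω | binDigit 2 (X ω) = b₂}
        = {ω | binDigit 2 (X ω) = b₂ ∧ binDigit 3 (X ω) = 0}
          ∪ {ω | binDigit 2 (X ω) = b₂ ∧ binDigit 3 (X ω) = 1} := by
      ext ω; simp only [mem_setOf_eq, mem_union]
      rcases binDigit_zero_or_one 3 (X ω) with h|h <;> simp [h]
    have hdisj : Disjoint {ω | binDigit 2 (X ω) = b₂ ∧ binDigit 3 (X ω) = 0}
        {ω | binDigit 2 (X ω) = b₂ ∧ binDigit 3 (X ω) = 1} := by
      rw [Set.disjoint_left]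
      rintro ω ⟨_, h0⟩ ⟨_, h1⟩
      rw [h0] at h1; exact absurd h1 (by norm_num)
    rw [hsp, measure_union hdisj (hmeasJ b₂ 1), hJ b₂ 0 h₂ (Or.inl rfl),
      hJ b₂ 1 h₂ (Or.inr rfl), quarter_add_quarter]
  have hB : ∀ b₃ : ℤ, (b₃ = 0 ∨ b₃ = 1) → ℙ {ω | binDigit 3 (X ω) = b₃} = 1/2 := by
    intro b₃ h₃
    have hsp : {ω | binDigit 3 (X ω) = b₃}
        = {ω | binDigit 2 (X ω) = 0 ∧ binDigit 3 (X ω) = b₃}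
          ∪ {ω | binDigit 2 (X ω) = 1 ∧ binDigit 3 (X ω) = b₃} := by
      ext ω; simp only [mem_setOf_eq, mem_union]
      rcases binDigit_zero_or_one 2 (X ω) with h|h <;> simp [h]
    have hdisj : Disjoint {ω | binDigit 2 (X ω) = 0 ∧ binDigit 3 (X ω) = b₃}
        {ω | binDigit 2 (X ω) = 1 ∧ binDigit 3 (X ω) = b₃} := by
      rw [Set.disjoint_left]
      rintro ω ⟨h0, _⟩ ⟨h1, _⟩
      rw [h0] at h1; exact absurd h1 (by norm_num)
    rw [hsp, measure_union hdisj (hmeasJ 1 b₃), hJ 0 b₃ (Or.inl rfl) h₃,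
      hJ 1 b₃ (Or.inr rfl) h₃, quarter_add_quarter]
  have hJ' : ∀ b₂ b₃ : ℤ, (b₂ = 0 ∨ b₂ = 1) → (b₃ = 0 ∨ b₃ = 1) →
      ℙ ({ω | binDigit 2 (X ω) = b₂} ∩ {ω | binDigit 3 (X ω) = b₃}) = 1/4 := by
    intro b₂ b₃ h₂ h₃
    rw [← Set.setOf_and]
    exact hJ b₂ b₃ h₂ h₃
  have hprod : ∀ b₂ b₃ : ℤ, (b₂ = 0 ∨ b₂ = 1) → (b₃ = 0 ∨ b₃ = 1) →
      ℙ ({ω | binDigit 2 (X ω) = b₂} ∩ {ω | binDigit 3 (X ω) = b₃})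
        = ℙ {ω | binDigit 2 (X ω) = b₂} * ℙ {ω | binDigit 3 (X ω) = b₃} := by
    intro b₂ b₃ h₂ h₃
    rw [hJ' b₂ b₃ h₂ h₃, hA b₂ h₂, hB b₃ h₃, half_mul_half]
  have hAU : {ω | binDigit 2 (X ω) = 0} ∪ {ω | binDigit 2 (X ω) = 1} = univ := by
    ext ω
    simpa using binDigit_zero_or_one 2 (X ω)
  have hBU : {ω | binDigit 3 (X ω) = 0} ∪ {ω | binDigit 3 (X ω) = 1} = univ := by
    ext ω
    simpa using binDigit_zero_or_one 3 (X ω)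
  refine ⟨fun b₂ b₃ h₂ h₃ => ⟨hJ b₂ b₃ h₂ h₃, ?_⟩, ?_⟩
  · rw [hJ b₂ b₃ h₂ h₃, hA b₂ h₂, hB b₃ h₃, half_mul_half]
  · classical
    rw [indepFun_iff_measure_inter_preimage_eq_mul]
    intro s t hs ht
    rw [preim_eq _ (fun ω => binDigit_zero_or_one 2 (X ω)) s,
      preim_eq _ (fun ω => binDigit_zero_or_one 3 (X ω)) t]
    split_ifs with h0 h1 h2 h3 <;>
      simp only [Set.union_empty, Set.empty_union, hAU, hBU, Set.univ_inter, Set.inter_univ,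
        Set.empty_inter, Set.inter_empty, measure_empty, measure_univ, one_mul, mul_one,
        zero_mul, mul_zero] <;>
      first
        | rfl
        | exact hprod 0 0 (Or.inl rfl) (Or.inl rfl)
        | exact hprod 0 1 (Or.inl rfl) (Or.inr rfl)
        | exact hprod 1 0 (Or.inr rfl) (Or.inl rfl)
        | exact hprod 1 1 (Or.inr rfl) (Or.inr rfl)
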